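/- A point (s,p) ∈ ℂ² lies in the topological boundary of the symmetrized bidisc G₂ if and only if |s| ≤ 2 and |s - conj(s)·p| + |p|² = 1. -/

import Mathlib

open Complex

/-- The symmetrized bidisc, described by its defining inequality. -/
def symBidisc : Set (ℂ × ℂ) :=
  {q | ‖q.1 - (starRingEnd ℂ) q.1 * q.2‖ + (‖q.2‖) ^ 2 < 1}

/-!
The defining function `F(s, p) = |s - s̄p| + |p|²` is continuous, so `G₂ = {F < 1}` is open and its
closure lies in `{F ≤ 1}`; on `G₂` the triangle inequality `|s| ≤ |s - s̄p| + |s||p|` gives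
`|s| < 1 + |p| < 2`. Conversely, if `|s| ≤ 2` and `F(s, p) ≤ 1`, the points `t • (s, p)` with
`t ∈ (0, 1)` lie in `G₂` and tend to `(s, p)`. Hence `closure G₂ = {|s| ≤ 2, F ≤ 1}`, and removing
the open set `G₂ = interior G₂` leaves `{|s| ≤ 2, F = 1}`.
-/

noncomputable def symBidiscFun (q : ℂ × ℂ) : ℝ :=
  ‖q.1 - (starRingEnd ℂ) q.1 * q.2‖ + ‖q.2‖ ^ 2

lemma symBidisc_eq : symBidisc = {q | symBidiscFun q < 1} := rfl

lemma continuous_symBidiscFun : Continuous symBidiscFun := by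
  unfold symBidiscFun
  fun_prop

lemma isOpen_symBidisc : IsOpen symBidisc :=
  isOpen_lt continuous_symBidiscFun continuous_const

lemma norm_fst_lt_two_of_mem_symBidisc {q : ℂ × ℂ} (hq : q ∈ symBidisc) : ‖q.1‖ < 2 := by
  obtain ⟨s, p⟩ := q
  have hq' : ‖s - (starRingEnd ℂ) s * p‖ + ‖p‖ ^ 2 < 1 := hq
  have hp : ‖p‖ < 1 := by nlinarith [norm_nonneg (s - (starRingEnd ℂ) s * p), norm_nonneg p]
  have htri : ‖s‖ ≤ ‖s - (starRingEnd ℂ) s * p‖ + ‖s‖ * ‖p‖ := by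
    calc ‖s‖ = ‖(s - (starRingEnd ℂ) s * p) + (starRingEnd ℂ) s * p‖ := by ring_nf
      _ ≤ ‖s - (starRingEnd ℂ) s * p‖ + ‖(starRingEnd ℂ) s * p‖ := norm_add_le _ _
      _ = ‖s - (starRingEnd ℂ) s * p‖ + ‖s‖ * ‖p‖ := by rw [norm_mul, Complex.norm_conj]
  -- `|s|(1 - |p|) < 1 - |p|²`, and `1 - |p| > 0`
  nlinarith [norm_nonneg s, norm_nonneg p]

lemma symBidiscFun_smul_le (q : ℂ × ℂ) {t : ℝ} (ht₀ : 0 ≤ t) (ht₁ : t ≤ 1) :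
    symBidiscFun (t • q) ≤ t * ‖q.1 - (starRingEnd ℂ) q.1 * q.2‖
      + t * (1 - t) * (‖q.1‖ * ‖q.2‖) + t ^ 2 * ‖q.2‖ ^ 2 := by
  obtain ⟨s, p⟩ := q
  have hsplit : t • s - (starRingEnd ℂ) (t • s) * (t • p)
      = t • (s - (starRingEnd ℂ) s * p) + (t * (1 - t)) • ((starRingEnd ℂ) s * p) := by
    simp only [Complex.real_smul, map_mul, Complex.conj_ofReal]
    push_cast
    ring
  have h1t : ‖(1 : ℝ) - t‖ = 1 - t := Real.norm_of_nonneg (sub_nonneg.2 ht₁)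
  have hnorm := norm_add_le (t • (s - (starRingEnd ℂ) s * p))
    ((t * (1 - t)) • ((starRingEnd ℂ) s * p))
  rw [← hsplit] at hnorm
  simp only [norm_smul, norm_mul, Complex.norm_conj, Real.norm_of_nonneg ht₀, h1t] at hnorm
  simp only [symBidiscFun, Prod.smul_fst, Prod.smul_snd, norm_smul, Real.norm_of_nonneg ht₀]
  nlinarith

lemma smul_mem_symBidisc {q : ℂ × ℂ} (hs : ‖q.1‖ ≤ 2) (hq : symBidiscFun q ≤ 1)
    {t : ℝ} (ht₀ : 0 < t) (ht₁ : t < 1) : t • q ∈ symBidisc := by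
  have hbound := symBidiscFun_smul_le q ht₀.le ht₁.le
  have hq' : ‖q.1 - (starRingEnd ℂ) q.1 * q.2‖ + ‖q.2‖ ^ 2 ≤ 1 := hq
  set r := ‖q.2‖
  have hr : r ≤ 1 := by nlinarith [norm_nonneg (q.1 - (starRingEnd ℂ) q.1 * q.2), norm_nonneg q.2]
  have hsr : ‖q.1‖ * r ≤ 2 * r := mul_le_mul_of_nonneg_right hs (norm_nonneg _)
  have htr : 0 < 1 - t * r := by nlinarith [norm_nonneg q.2]
  -- with `|s - s̄p| ≤ 1 - r²` and `|s| ≤ 2`, the bound falls short of `1` by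
  -- `(1 - t) ((1 - t r)² + t (1 - t) r²) > 0`
  have h1t : 0 < 1 - t := sub_pos.2 ht₁
  have hgap : 0 < (1 - t) * ((1 - t * r) ^ 2 + t * (1 - t) * r ^ 2) := by positivity
  show symBidiscFun (t • q) < 1
  nlinarith [mul_pos ht₀ h1t]

lemma closure_symBidisc : closure symBidisc = {q | ‖q.1‖ ≤ 2 ∧ symBidiscFun q ≤ 1} := by
  apply subset_antisymm
  · refine closure_minimal (fun q hq => ⟨(norm_fst_lt_two_of_mem_symBidisc hq).le, le_of_lt hq⟩) ?_
    exact (isClosed_le (continuous_norm.comp continuous_fst) continuous_const).inter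
      (isClosed_le continuous_symBidiscFun continuous_const)
  · rintro q ⟨hs, hq⟩
    have hlim : Filter.Tendsto (fun t : ℝ => t • q) (nhdsWithin 1 (Set.Ioo 0 1)) (nhds q) :=
      ((continuous_id.smul continuous_const).tendsto' 1 q (one_smul ℝ q)).mono_left
        nhdsWithin_le_nhds
    have := right_nhdsWithin_Ioo_neBot (zero_lt_one' ℝ)
    exact mem_closure_of_tendsto hlim <| eventually_nhdsWithin_of_forall
      fun t ht => smul_mem_symBidisc hs hq ht.1 ht.2

theorem stmt4 (s p : ℂ) :
    (s, p) ∈ frontier symBidisc ↔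
      ‖s‖ ≤ 2 ∧
        ‖s - (starRingEnd ℂ) s * p‖ + (‖p‖) ^ 2 = 1 := by
  rw [frontier, isOpen_symBidisc.interior_eq, closure_symBidisc, symBidisc_eq]
  show (‖s‖ ≤ 2 ∧ symBidiscFun (s, p) ≤ 1) ∧ ¬ symBidiscFun (s, p) < 1 ↔
    ‖s‖ ≤ 2 ∧ symBidiscFun (s, p) = 1
  rw [not_lt, and_assoc, le_antisymm_iff]
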